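/- Let n ≥ 2, d ≥ 2, and let i₁, …, i_d ∈ {1, …, n} with i₁ ≠ i₂. Then the iterated ring commutator [X_{i₁}, X_{i₂}, …, X_{i_d}] is a nonzero element of the free associative ℤ-algebra ℤ⟨X₁, …, X_n⟩. -/

import Mathlib

/-- The ring commutator `[a,b] = a * b - b * a`. -/
def ringComm {R : Type*} [Ring R] (a b : R) : R := a * b - b * a

/-- `iterComm a [b₁, …, bₘ] = [a, b₁, …, bₘ]`, the left-normed iterated ring
commutator. -/
def iterComm {R : Type*} [Ring R] : R → List R → R
  | a, [] => a
  | a, b :: l => iterComm (ringComm a b) l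

/-- The iterated ring commutator `[a₁, …, a_d]` of a nonempty list. -/
def iterCommList {R : Type*} [Ring R] : List R → R
  | [] => 0
  | a :: l => iterComm a l

/-!
Work in `R[FreeMonoid α] ≅ FreeAlgebra R α`. If `f` commutes with a letter `X_j`, comparing
coefficients of `w * j` in `f X_j = X_j f` rotates a trailing `j` to the front of a word, so `f`
vanishes on every word containing a letter other than `j`. A commutator `[f, X_j]`, on the other
hand, vanishes on every power `x ^ k` of a single letter. Hence `[f, X_j] ≠ 0` whenever `f ≠ 0`
is itself such a commutator, and induction starting from `[X_{i₁}, X_{i₂}] ≠ 0` gives the claim.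
-/

namespace FreeMonoid

variable {α : Type*}

theorem eq_of_of_mul_eq_of_mul {x y : α} {u v : FreeMonoid α} (h : of x * u = of y * v) :
    x = y :=
  (List.cons.inj (congrArg toList h)).1

theorem mem_of_pow {x y : α} {k : ℕ} : y ∈ of x ^ k ↔ k ≠ 0 ∧ y = x := by
  induction k with
  | zero => simpa using notMem_one
  | succ k ih => rw [pow_succ, mem_mul, mem_of, ih]; grind

theorem exists_eq_pow_or_eq_pow_mul_of_mul (j : α) (w : FreeMonoid α) :
    (∃ k, w = of j ^ k) ∨ ∃ a x v, x ≠ j ∧ w = of j ^ a * (of x * v) := by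
  induction w using FreeMonoid.inductionOn' with
  | one => exact .inl ⟨0, rfl⟩
  | of_mul z w ih =>
    by_cases hz : z = j
    · subst hz
      rcases ih with ⟨k, rfl⟩ | ⟨a, x, v, hx, rfl⟩
      · exact .inl ⟨k + 1, (pow_succ' _ _).symm⟩
      · exact .inr ⟨a + 1, x, v, hx, by rw [pow_succ', mul_assoc]⟩
    · exact .inr ⟨0, z, w, hz, by rw [pow_zero, one_mul]⟩

end FreeMonoid

open MonoidAlgebra FreeMonoid

section Semiring

variable {R α : Type*} [Semiring R]

theorem coeff_pow_mul_of_mul_eq_zero_of_commute {f : MonoidAlgebra R (FreeMonoid α)} {j : α}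
    (hf : Commute f (single (of j) 1)) {x : α} (hx : x ≠ j) (a : ℕ) (v : FreeMonoid α) :
    f.coeff (of j ^ a * (of x * v)) = 0 := by
  induction a generalizing v with
  | zero =>
    have hv : ∀ d, of j * d ≠ of x * (v * of j) := fun d h => hx (eq_of_of_mul_eq_of_mul h).symm
    calc f.coeff (of j ^ 0 * (of x * v))
        = (f * single (of j) 1).coeff (of x * v * of j) := by simp
      _ = (single (of j) 1 * f).coeff (of x * (v * of j)) := by rw [hf.eq, mul_assoc]
      _ = 0 := coeff_single_mul_of_forall_mul_ne _ _ hv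
  | succ a ih =>
    calc f.coeff (of j ^ (a + 1) * (of x * v))
        = (f * single (of j) 1).coeff (of j ^ (a + 1) * (of x * v) * of j) := by simp
      _ = (single (of j) 1 * f).coeff (of j * (of j ^ a * (of x * (v * of j)))) := by
          rw [hf.eq, pow_succ']; simp only [mul_assoc]
      _ = 0 := by rw [coeff_single_mul_mul, one_mul, ih]

end Semiring

section Ring

variable {R α : Type*} [Ring R]

theorem coeff_ringComm_single_of_pow (f : MonoidAlgebra R (FreeMonoid α)) (j x : α) (k : ℕ) :
    (ringComm f (single (of j) 1)).coeff (of x ^ k) = 0 := by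
  rw [ringComm, coeff_sub, Finsupp.sub_apply, sub_eq_zero]
  by_cases h : k ≠ 0 ∧ j = x
  · obtain ⟨hk, rfl⟩ := h
    obtain ⟨m, rfl⟩ := Nat.exists_eq_succ_of_ne_zero hk
    rw [pow_succ, coeff_mul_single_mul, mul_one, ← pow_succ, pow_succ', coeff_single_mul_mul,
      one_mul]
  · have hj : j ∉ of x ^ k := mem_of_pow.not.2 h
    have hright : ∀ d, d * of j ≠ of x ^ k := fun d hd => hj (hd ▸ mem_mul.2 (.inr mem_of_self))
    have hleft : ∀ d, of j * d ≠ of x ^ k := fun d hd => hj (hd ▸ mem_mul.2 (.inl mem_of_self))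
    rw [coeff_mul_single_of_forall_mul_ne _ _ hright, coeff_single_mul_of_forall_mul_ne _ _ hleft]

theorem ringComm_single_ne_zero {f : MonoidAlgebra R (FreeMonoid α)} (hf : f ≠ 0)
    (hpow : ∀ (x : α) (k : ℕ), f.coeff (of x ^ k) = 0) (j : α) :
    ringComm f (single (of j) 1) ≠ 0 := by
  intro h
  have hcomm : Commute f (single (of j) 1) := sub_eq_zero.1 h
  refine hf (MonoidAlgebra.ext (Finsupp.ext fun w => ?_))
  rcases exists_eq_pow_or_eq_pow_mul_of_mul j w with ⟨k, rfl⟩ | ⟨a, x, v, hx, rfl⟩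
  · exact hpow j k
  · exact coeff_pow_mul_of_mul_eq_zero_of_commute hcomm hx a v

theorem iterComm_map_single_ne_zero {f : MonoidAlgebra R (FreeMonoid α)} (hf : f ≠ 0)
    (hpow : ∀ (x : α) (k : ℕ), f.coeff (of x ^ k) = 0) (l : List α) :
    iterComm f (l.map fun x => single (of x) 1) ≠ 0 := by
  induction l generalizing f with
  | nil => exact hf
  | cons j l ih =>
    exact ih (ringComm_single_ne_zero hf hpow j) (coeff_ringComm_single_of_pow f j)

theorem iterCommList_map_single_ne_zero [Nontrivial R] {a b : α} (hab : a ≠ b) (l : List α) :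
    iterCommList ((a :: b :: l).map fun x => single (of x) (1 : R)) ≠ 0 := by
  refine iterComm_map_single_ne_zero (fun h => ?_) (coeff_ringComm_single_of_pow _ b) l
  have hcomm : Commute (single (of a) (1 : R)) (single (of b) 1) := sub_eq_zero.1 h
  simpa using coeff_pow_mul_of_mul_eq_zero_of_commute hcomm hab 0 1

end Ring

theorem map_iterComm {R S F : Type*} [Ring R] [Ring S] [FunLike F R S] [RingHomClass F R S]
    (φ : F) (a : R) (l : List R) : φ (iterComm a l) = iterComm (φ a) (l.map φ) := by
  induction l generalizing a with
  | nil => rfl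
  | cons b l ih => simp only [iterComm, ih, ringComm, map_sub, map_mul, List.map_cons]

theorem map_iterCommList {R S F : Type*} [Ring R] [Ring S] [FunLike F R S] [RingHomClass F R S]
    (φ : F) (l : List R) : φ (iterCommList l) = iterCommList (l.map φ) := by
  cases l with
  | nil => exact map_zero φ
  | cons a l => exact map_iterComm φ a l

theorem FreeAlgebra.iterCommList_ι_ne_zero {R α : Type*} [CommRing R] [Nontrivial R] {a b : α}
    (hab : a ≠ b) (l : List α) : iterCommList ((a :: b :: l).map (ι R)) ≠ 0 := by
  have he : ⇑equivMonoidAlgebraFreeMonoid ∘ ι R = fun x : α => single (of x) (1 : R) := by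
    funext x; simp [equivMonoidAlgebraFreeMonoid]
  intro h
  apply iterCommList_map_single_ne_zero (R := R) hab l
  rw [← he, ← List.map_map, ← map_iterCommList, h, map_zero]

/-- For `n ≥ 2`, `d ≥ 2` and indices `i₁, …, i_d` with `i₁ ≠ i₂`, the iterated ring
commutator `[X_{i₁}, X_{i₂}, …, X_{i_d}]` is a nonzero element of the free associative
`ℤ`-algebra on `n` noncommuting variables. -/
theorem iterCommList_ne_zero (n d : ℕ) (hd : 2 ≤ d)
    (idx : Fin d → Fin n)
    (h12 : idx ⟨0, by omega⟩ ≠ idx ⟨1, by omega⟩) :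
    iterCommList (List.ofFn fun t => FreeAlgebra.ι ℤ (idx t)) ≠ 0 := by
  obtain ⟨m, rfl⟩ : ∃ m, d = m + 2 := ⟨d - 2, by omega⟩
  have hne := FreeAlgebra.iterCommList_ι_ne_zero (R := ℤ) h12
    (List.ofFn fun t : Fin m => idx t.succ.succ)
  rw [List.map_cons, List.map_cons, List.map_ofFn] at hne
  rw [List.ofFn_succ, List.ofFn_succ]
  exact hne
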